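/- (Subtree inequality, the induction claim in the proof of Theorem 1.) Let n ∈ ℕ and let θ, θ̃ be angle assignments on depth n with prepared amplitudes ψ and ψ̃. Fix a bitstring x of length k with 0 ≤ k ≤ n and define the subtree overlap H_x = Σ_{s ∈ {0,1}^{n−k}} ψ_{xs} · ψ̃_{xs}, where xs denotes concatenation. Then H_x ≥ W_x − Σ_{j=k}^{n−1} Σ_{y ∈ {0,1}^j, y extends x} W_y · (1 − cos((θ_y − θ̃_y)/2)), where a bitstring y extends x if x is a prefix of y. -/

import Mathlib

/-- `g θ i`: `g(θ,0) = cos(θ/2)`, `g(θ,1) = sin(θ/2)`, with bits as `Bool`. -/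
noncomputable def g (θ : ℝ) : Bool → ℝ
  | false => Real.cos (θ / 2)
  | true  => Real.sin (θ / 2)

/-- Prepared amplitude `ψ_b = ∏_{l=1}^n g(θ_{b_1…b_{l−1}}, b_l)`. -/
noncomputable def amp (n : ℕ) (θ : (j : ℕ) → (Fin j → Bool) → ℝ) (b : Fin n → Bool) : ℝ :=
  ∏ l : Fin n, g (θ l (fun i : Fin l => b (Fin.castLE l.isLt.le i))) (b l)

/-- Joint weight `W_x = ∏_{l=1}^k g(θ_{x_1…x_{l−1}}, x_l)·g(θ'_{x_1…x_{l−1}}, x_l)`. -/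
noncomputable def W (θ θ' : (j : ℕ) → (Fin j → Bool) → ℝ) (k : ℕ) (x : Fin k → Bool) : ℝ :=
  ∏ l : Fin k,
    (g (θ l (fun i : Fin l => x (Fin.castLE l.isLt.le i))) (x l) *
      g (θ' l (fun i : Fin l => x (Fin.castLE l.isLt.le i))) (x l))

/-- Concatenation `xs ∈ {0,1}^n` of `x ∈ {0,1}^k` and `s ∈ {0,1}^{n−k}` for `k ≤ n`. -/
def appendBits {n k : ℕ} (hk : k ≤ n) (x : Fin k → Bool) (s : Fin (n - k) → Bool)
    (i : Fin n) : Bool :=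
  Fin.append x s (Fin.cast (by omega) i)

/-!
The inequality holds with equality, `H_x = W_x - D_x` where `D_x` is the subtracted sum, by
downward induction on the length of `x`. The subtree at `x` splits into those at `x0` and `x1`,
so `H_x = H_{x0} + H_{x1}`; and by the cosine subtraction formula
`W_{x0} + W_{x1} = W_x cos((θ_x - θ'_x)/2)`, which accounts exactly for the `j = |x|` term of `D_x`.
-/

section Prefix

variable {α : Type*} {j k : ℕ}

def Extends (y : Fin j → α) (x : Fin k → α) : Prop :=
  ∀ (i : Fin k) (hi : (i : ℕ) < j), y ⟨i, hi⟩ = x i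

instance [DecidableEq α] (y : Fin j → α) (x : Fin k → α) : Decidable (Extends y x) :=
  inferInstanceAs (Decidable (∀ (i : Fin k) (hi : (i : ℕ) < j), y ⟨i, hi⟩ = x i))

theorem extends_iff_eq {y x : Fin k → α} : Extends y x ↔ y = x :=
  ⟨fun h => funext fun i => h i i.isLt, fun h _ _ => h ▸ rfl⟩

theorem extends_snoc_iff (hkj : k < j) (y : Fin j → α) (x : Fin k → α) (b : α) :
    Extends y (Fin.snoc x b : Fin (k + 1) → α) ↔ Extends y x ∧ y ⟨k, hkj⟩ = b := by
  constructor
  · intro h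
    refine ⟨fun i hi => ?_, ?_⟩
    · simpa using h i.castSucc hi
    · simpa using h (Fin.last k) hkj
  · rintro ⟨hx, rfl⟩ i hi
    induction i using Fin.lastCases with
    | last => simp
    | cast i => simpa using hx i hi

theorem sum_sum_extends_snoc [Fintype α] [DecidableEq α] {M : Type*} [AddCommMonoid M]
    (hkj : k < j) (x : Fin k → α) (f : (Fin j → α) → M) :
    ∑ b : α, ∑ y : Fin j → α, (if Extends y (Fin.snoc x b : Fin (k + 1) → α) then f y else 0)
      = ∑ y : Fin j → α, if Extends y x then f y else 0 := by
  rw [Finset.sum_comm]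
  refine Finset.sum_congr rfl fun y _ => ?_
  simp_rw [extends_snoc_iff hkj, ite_and]
  split_ifs <;> simp

end Prefix

theorem appendBits_apply {n k : ℕ} (hk : k ≤ n) (x : Fin k → Bool) (s : Fin (n - k) → Bool)
    (i : Fin n) :
    appendBits hk x s i = if h : (i : ℕ) < k then x ⟨i, h⟩ else s ⟨i - k, by omega⟩ := by
  simp [appendBits, Fin.append, Fin.addCases, Fin.castLT, Fin.subNat]

theorem sum_appendBits {M : Type*} [AddCommMonoid M] {n k : ℕ} (hk : k ≤ n) (x : Fin k → Bool)
    (F : (Fin n → Bool) → M) :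
    ∑ s : Fin (n - k) → Bool, F (appendBits hk x s)
      = ∑ z : Fin n → Bool, if Extends z x then F z else 0 := by
  rw [← Finset.sum_filter]
  refine Finset.sum_bij' (fun s _ => appendBits hk x s) (fun z _ i => z ⟨k + i, by omega⟩)
    (fun s _ => ?_) (fun _ _ => Finset.mem_univ _) (fun s _ => ?_) (fun z hz => ?_)
    (fun _ _ => rfl)
  · refine Finset.mem_filter.2 ⟨Finset.mem_univ _, fun i hi => ?_⟩
    simp [appendBits_apply]
  · funext i
    simp [appendBits_apply]
  · funext i
    rw [appendBits_apply]
    split_ifs with h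
    · exact ((Finset.mem_filter.1 hz).2 ⟨i, h⟩ i.isLt).symm
    · exact congrArg z (Fin.ext (by simp; omega))

theorem W_snoc (θ θ' : (j : ℕ) → (Fin j → Bool) → ℝ) {k : ℕ} (x : Fin k → Bool) (b : Bool) :
    W θ θ' (k + 1) (Fin.snoc x b) = W θ θ' k x * (g (θ k x) b * g (θ' k x) b) := by
  have hinit : ∀ (l : ℕ) (hl : l ≤ k),
      (fun i : Fin l => (Fin.snoc x b : Fin (k + 1) → Bool) (Fin.castLE (by omega) i))
        = fun i => x (Fin.castLE hl i) :=
    fun l hl => funext fun i => Fin.snoc_castSucc (α := fun _ => Bool) b x (Fin.castLE hl i)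
  rw [W, Fin.prod_univ_castSucc]
  simp [hinit, W]

theorem sum_g_mul_g (φ φ' : ℝ) : ∑ b, g φ b * g φ' b = Real.cos ((φ - φ') / 2) := by
  simp [g, sub_div, Real.cos_sub, add_comm]

theorem amp_mul_amp (θ θ' : (j : ℕ) → (Fin j → Bool) → ℝ) (n : ℕ) (z : Fin n → Bool) :
    amp n θ z * amp n θ' z = W θ θ' n z := by
  rw [amp, amp, W, Finset.prod_mul_distrib]

section Subtree

variable (θ θ' : (j : ℕ) → (Fin j → Bool) → ℝ) (n : ℕ)

noncomputable def subtreeOverlap {k : ℕ} (x : Fin k → Bool) : ℝ :=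
  ∑ z : Fin n → Bool, if Extends z x then W θ θ' n z else 0

noncomputable def subtreeDefect {k : ℕ} (x : Fin k → Bool) : ℝ :=
  ∑ j ∈ Finset.Ico k n, ∑ y : Fin j → Bool,
    if Extends y x then W θ θ' j y * (1 - Real.cos ((θ j y - θ' j y) / 2)) else 0

theorem sum_W_snoc {k : ℕ} (x : Fin k → Bool) :
    ∑ b, W θ θ' (k + 1) (Fin.snoc x b) = W θ θ' k x * Real.cos ((θ k x - θ' k x) / 2) := by
  simp_rw [W_snoc, ← Finset.mul_sum, sum_g_mul_g]

theorem subtreeOverlap_self (x : Fin n → Bool) : subtreeOverlap θ θ' n x = W θ θ' n x := by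
  simp [subtreeOverlap, extends_iff_eq]

theorem subtreeDefect_self (x : Fin n → Bool) : subtreeDefect θ θ' n x = 0 := by
  simp [subtreeDefect]

variable {n}

theorem subtreeOverlap_eq_sum_snoc {k : ℕ} (hk : k < n) (x : Fin k → Bool) :
    subtreeOverlap θ θ' n x = ∑ b, subtreeOverlap θ θ' n (Fin.snoc x b : Fin (k + 1) → Bool) :=
  (sum_sum_extends_snoc hk x _).symm

theorem subtreeDefect_eq_add_sum_snoc {k : ℕ} (hk : k < n) (x : Fin k → Bool) :
    subtreeDefect θ θ' n x = W θ θ' k x * (1 - Real.cos ((θ k x - θ' k x) / 2))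
      + ∑ b, subtreeDefect θ θ' n (Fin.snoc x b : Fin (k + 1) → Bool) := by
  rw [subtreeDefect, Finset.sum_eq_sum_Ico_succ_bot hk]
  simp only [extends_iff_eq, Finset.sum_ite_eq', Finset.mem_univ, if_true, subtreeDefect]
  rw [Finset.sum_comm]
  congr 1
  refine Finset.sum_congr rfl fun j hj => (sum_sum_extends_snoc ?_ x _).symm
  exact (Finset.mem_Ico.1 hj).1

theorem subtreeOverlap_eq_W_sub_subtreeDefect {k : ℕ} (hk : k ≤ n) (x : Fin k → Bool) :
    subtreeOverlap θ θ' n x = W θ θ' k x - subtreeDefect θ θ' n x := by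
  induction hk using Nat.decreasingInduction with
  | self => rw [subtreeOverlap_self, subtreeDefect_self, sub_zero]
  | of_succ k hk ih =>
    rw [subtreeOverlap_eq_sum_snoc θ θ' hk, subtreeDefect_eq_add_sum_snoc θ θ' hk]
    simp_rw [ih, Finset.sum_sub_distrib, sum_W_snoc]
    ring

end Subtree

open scoped Classical in
/-- Subtree inequality (induction claim in the proof of Theorem 1): for a bitstring `x`
of length `k ≤ n`, the subtree overlap `H_x = Σ_{s∈{0,1}^{n−k}} ψ_{xs} ψ'_{xs}` satisfies
`H_x ≥ W_x − Σ_{j=k}^{n−1} Σ_{y∈{0,1}^j, y extends x} W_y·(1 − cos((θ_y − θ'_y)/2))`. -/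
theorem stmt6 (n k : ℕ) (hk : k ≤ n)
    (θ θ' : (j : ℕ) → (Fin j → Bool) → ℝ)
    (x : Fin k → Bool) :
    (∑ s : Fin (n - k) → Bool,
        amp n θ (appendBits hk x s) * amp n θ' (appendBits hk x s))
      ≥ W θ θ' k x - ∑ j ∈ Finset.Ico k n, ∑ y : Fin j → Bool,
          (if ∀ (i : Fin k) (hi : (i : ℕ) < j), y ⟨i, hi⟩ = x i
            then W θ θ' j y * (1 - Real.cos ((θ j y - θ' j y) / 2)) else 0) := by
  have h := subtreeOverlap_eq_W_sub_subtreeDefect θ θ' hk x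
  rw [subtreeOverlap, ← sum_appendBits hk x] at h
  simp only [amp_mul_amp]
  exact h.ge
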